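/- (Two-blocks exchange estimate, part of Lemma 3.5) Fix a jump rate c with lower bound c₀ > 0, constants C > 0 and K ≥ 0, and let Λ be the subgraph of X with V_Λ := B(o,K), E_Λ := {e ∈ E : oe,te ∈ V_Λ}. Let ε > 0, m ≥ 1, and σ ∈ Γ with 2K < |σ|_Γ ≤ ε√t_m, and suppose the covering map X → X_m is injective on B(o,K+1) ∪ σB(o,K+1). Then for every μ ∈ P_{m,C} (identified with its Γ_m-periodic extension to Z) one has I^{(o,o)}_{Λ×Λ}(σ̂μ) ≤ (4C/c₀) ε², where σ̂μ is the pushforward of μ under η ↦ (η, σ⁻¹η). -/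

import Mathlib

open Filter Pointwise

namespace Tower

variable {Γ : Type} [Group Γ] [DecidableEq Γ]

/-- The ball of radius `n` about the identity in the Cayley graph of `(Γ, S)`, as a `Finset`:
products of at most `n` elements of `S`. -/
def ballF (S : Finset Γ) : ℕ → Finset Γ
  | 0 => {1}
  | n + 1 => ballF S n ∪ ballF S n * S

lemma one_mem_ballF (S : Finset Γ) (n : ℕ) : (1 : Γ) ∈ ballF S n := by
  induction n with
  | zero => simp [ballF]
  | succ n ih => exact Finset.mem_union_left _ ih

/-- The word norm of `x` with respect to `S`. -/
noncomputable def wordNorm (S : Finset Γ) (x : Γ) : ℕ := sInf {n | x ∈ ballF S n}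

/-- `(F i)` is a Følner sequence for `(Γ, S)`. -/
def IsFolner (S : Finset Γ) (F : ℕ → Finset Γ) : Prop :=
  (∀ i, (F i).Nonempty) ∧
    Tendsto (fun i => (((F i * S) \ F i).card : ℝ) / (F i).card) atTop (nhds 0)

/-- `b(K)`: the largest `i` such that `F i` is contained in the ball of radius `K` about `o`. -/
noncomputable def bFol (S : Finset Γ) (F : ℕ → Finset Γ) (K : ℝ) : ℕ :=
  sSup {i | ∀ x ∈ F i, (wordNorm S x : ℝ) ≤ K}

/-- Exchange the values of a configuration at two coordinates. -/
def exch {α : Type} [DecidableEq α] (x y : α) (η : α → Bool) : α → Bool :=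
  fun z => if z = x then η y else if z = y then η x else η z

/-- Exchange of values at two coordinates, on configurations restricted to a `Finset`. -/
def exchOn {α : Type} [DecidableEq α] (A : Finset α) (x y : α)
    (ζ : {a // a ∈ A} → Bool) : {a // a ∈ A} → Bool :=
  fun z => if (z : α) = x then (if h : y ∈ A then ζ ⟨y, h⟩ else ζ z)
    else if (z : α) = y then (if h : x ∈ A then ζ ⟨x, h⟩ else ζ z) else ζ z

/-- The type of generators. -/
abbrev Gen (S : Finset Γ) : Type _ := {s : Γ // s ∈ S}

/-- A `Γ`-invariant local function bundle for vertices `f : V × Z → ℝ` on the Cayley graph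
`X = (V, E)` of `(Γ, S)`, `V = Γ`, `Z = {0,1}^V`. -/
structure LocalBundleV (S : Finset Γ) : Type _ where
  f : Γ → (Γ → Bool) → ℝ
  r : ℕ
  localized : ∀ (x : Γ) (η η' : Γ → Bool),
    (∀ z ∈ (ballF S r).image (x * ·), η z = η' z) → f x η = f x η'
  invariant : ∀ (σ x : Γ) (η : Γ → Bool), f (σ * x) (fun z => η (σ⁻¹ * z)) = f x η

/-- A jump rate: a symmetric, non-degenerate `Γ`-invariant local function bundle for edges,
an edge being encoded as a pair `(x, s) : Γ × Gen S` with origin `x` and terminus `x * s`. -/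
structure JumpRate (S : Finset Γ) : Type _ where
  c : Γ → Gen S → (Γ → Bool) → ℝ
  c₀ : ℝ
  c₀_pos : 0 < c₀
  nondeg : ∀ x s η, c₀ ≤ c x s η
  r : ℕ
  localized : ∀ (x : Γ) (s : Gen S) (η η' : Γ → Bool),
    (∀ z ∈ (ballF S r).image (x * ·) ∪ (ballF S r).image (x * (s : Γ) * ·), η z = η' z) →
      c x s η = c x s η'
  invariant : ∀ (σ x : Γ) (s : Gen S) (η : Γ → Bool),
    c (σ * x) s (fun z => η (σ⁻¹ * z)) = c x s η
  symm_rev : ∀ (x : Γ) (s : Gen S) (h : (s : Γ)⁻¹ ∈ S) (η : Γ → Bool),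
    c (x * (s : Γ)) ⟨(s : Γ)⁻¹, h⟩ η = c x s η
  symm_exch : ∀ (x : Γ) (s : Gen S) (η : Γ → Bool),
    c x s (exch x (x * (s : Γ)) η) = c x s η

/-- `ρ`-Bernoulli weight on `{0,1}`. -/
def bw (ρ : ℝ) (b : Bool) : ℝ := if b then ρ else 1 - ρ

/-- Expectation with respect to the `ρ`-Bernoulli product measure `ν_ρ` of a cylinder function
depending only on the coordinates in the finite set `A`. -/
noncomputable def expCyl (ρ : ℝ) (A : Finset Γ) (g : (Γ → Bool) → ℝ) : ℝ :=
  ∑ ζ : ({a // a ∈ A} → Bool),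
    (∏ a : {a // a ∈ A}, bw ρ (ζ a)) *
      g (fun z => if h : z ∈ A then ζ ⟨z, h⟩ else false)

/-- The global average `⟨f_o⟩(ρ) = E_{ν_ρ}[f_o]`. -/
noncomputable def globalAvg {S : Finset Γ} (f : LocalBundleV S) (ρ : ℝ) : ℝ :=
  expCyl ρ (ballF S f.r) (f.f 1)

section Quot

variable (N : Subgroup Γ)

/-- The configuration space `Z_m = {0,1}^{V_m}` over the quotient graph `X_m = Γ_m \ X`. -/
abbrev Conf (N : Subgroup Γ) : Type _ := (Γ ⧸ N) → Bool

/-- The `Γ_m`-periodic extension of a configuration on `X_m` to `X`. -/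
def liftZ (η : Conf N) : Γ → Bool := fun x => η (QuotientGroup.mk x)

/-- The function on `V_m × Z_m` induced by a local function bundle. -/
noncomputable def fQ {S : Finset Γ} (f : LocalBundleV S) (v : Γ ⧸ N) (η : Conf N) : ℝ :=
  f.f (Quotient.out v) (liftZ N η)

/-- The jump rate induced on the quotient graph, on the edge `(v, v * s)`. -/
noncomputable def cQ {S : Finset Γ} (c : JumpRate S) (v : Γ ⧸ N) (s : Gen S) (η : Conf N) : ℝ :=
  c.c (Quotient.out v) s (liftZ N η)

variable [N.Normal]

/-- `η^e` on the quotient, for the edge `e = (v, v * s)`. -/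
def exchQ [DecidableEq (Γ ⧸ N)] (v : Γ ⧸ N) (s : Γ) (η : Conf N) : Conf N :=
  exch v (v * QuotientGroup.mk s) η

/-- The graph distance on the quotient graph `X_m`. -/
noncomputable def distQ (S : Finset Γ) (v w : Γ ⧸ N) : ℕ :=
  sInf {n | ∃ x ∈ ballF S n, v * QuotientGroup.mk x = w}

/-- The diameter of the quotient graph `X_m`. -/
noncomputable def diamQ (S : Finset Γ) : ℕ :=
  sSup {k | ∃ v w : Γ ⧸ N, distQ N S v w = k}

variable [Fintype (Γ ⧸ N)] [DecidableEq (Γ ⧸ N)]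

/-- `μ` is a probability measure on the finite configuration space `Z_m`. -/
def IsProb (μ : Conf N → ℝ) : Prop := (∀ η, 0 ≤ μ η) ∧ ∑ η, μ η = 1

/-- The action of `Γ/Γ_m` on `Z_m`. -/
def actQ (σ : Γ ⧸ N) (η : Conf N) : Conf N := fun z => η (σ⁻¹ * z)

/-- `μ` is `Γ/Γ_m`-invariant. -/
def IsInvariant (μ : Conf N → ℝ) : Prop := ∀ σ η, μ (actQ N σ η) = μ η

/-- The uniform ((1/2)-Bernoulli) measure `ν_m` on `Z_m`. -/
noncomputable def nuU : Conf N → ℝ := fun _ => (Fintype.card (Conf N) : ℝ)⁻¹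

/-- The density `φ = dμ/dν_m`. -/
noncomputable def dens (μ : Conf N → ℝ) : Conf N → ℝ :=
  fun η => (Fintype.card (Conf N) : ℝ) * μ η

/-- `√φ` where `φ = dμ/dν_m`. -/
noncomputable def sqrtDens (μ : Conf N → ℝ) : Conf N → ℝ :=
  fun η => Real.sqrt (dens N μ η)

/-- Expectation with respect to a probability measure on `Z_m`. -/
noncomputable def Emeas (μ : Conf N → ℝ) (g : Conf N → ℝ) : ℝ := ∑ η, μ η * g η

/-- The generator `L_m F (η) = Σ_{e ∈ E_m} c(e,η) (F(η^e) - F(η))`. -/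
noncomputable def Lgen {S : Finset Γ} (c : JumpRate S) (F : Conf N → ℝ) (η : Conf N) : ℝ :=
  ∑ e : (Γ ⧸ N) × Gen S, cQ N c e.1 e.2 η * (F (exchQ N e.1 (e.2 : Γ) η) - F η)

/-- The Dirichlet form `I_m(μ) = -∫ √φ L_m √φ dν_m`. -/
noncomputable def ImGen {S : Finset Γ} (c : JumpRate S) (μ : Conf N → ℝ) : ℝ :=
  - ∑ η, nuU N η * (sqrtDens N μ η * Lgen N c (sqrtDens N μ) η)

/-- The Dirichlet form in sum form:
`I_m(μ) = (1/2) Σ_{e ∈ E_m} ∫ c(e,η) (π_e √φ)² dν_m`. -/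
noncomputable def ImSum {S : Finset Γ} (c : JumpRate S) (μ : Conf N → ℝ) : ℝ :=
  (1 / 2) * ∑ e : (Γ ⧸ N) × Gen S, ∑ η, nuU N η *
    (cQ N c e.1 e.2 η * (sqrtDens N μ (exchQ N e.1 (e.2 : Γ) η) - sqrtDens N μ η) ^ 2)

/-- The local average `f̄_{v,i}` on the quotient, over the Følner set `Fi`. -/
noncomputable def fbarQ {S : Finset Γ} (f : LocalBundleV S) (Fi : Finset Γ) (v : Γ ⧸ N)
    (η : Conf N) : ℝ :=
  ((Fi.card : ℝ))⁻¹ * ∑ σ ∈ Fi, fQ N f (QuotientGroup.mk σ * v) η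

/-- The local particle density `η̄_{v,i}` on the quotient, over the Følner set `Fi`. -/
noncomputable def etabarQ (Fi : Finset Γ) (v : Γ ⧸ N) (η : Conf N) : ℝ :=
  ((Fi.card : ℝ))⁻¹ * ∑ σ ∈ Fi, (if η (QuotientGroup.mk σ * v) then (1 : ℝ) else 0)

/-- The image of `E⁰ = {e ∈ E : oe = o or te = o}` in `E_m`. -/
def E0Q (S : Finset Γ) : Finset ((Γ ⧸ N) × Gen S) :=
  Finset.univ.filter fun e => e.1 = 1 ∨ e.1 * QuotientGroup.mk (e.2 : Γ) = 1

/-- The marginal `μ|_Λ` on `Z_Λ = {0,1}^A` of a measure on `Z_m` (identified with its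
`Γ_m`-periodic extension). -/
noncomputable def marg (A : Finset Γ) (μ : Conf N → ℝ) (ζ : {a // a ∈ A} → Bool) : ℝ :=
  ∑ η : Conf N, if (∀ a : {a // a ∈ A}, liftZ N η (a : Γ) = ζ a) then μ η else 0

/-- The density `φ_Λ = d(μ|_Λ)/dν_Λ`. -/
noncomputable def margDens (A : Finset Γ) (μ : Conf N → ℝ) (ζ : {a // a ∈ A} → Bool) : ℝ :=
  (Fintype.card ({a // a ∈ A} → Bool) : ℝ) * marg N A μ ζ

/-- The restricted Dirichlet form
`I°_Λ(μ) = (1/2) Σ_{e ∈ E_Λ} ∫_{Z_Λ} (π_e √φ_Λ)² dν_Λ` for the subgraph `Λ = (A, Eset)`. -/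
noncomputable def IrestV {S : Finset Γ} (A : Finset Γ) (Eset : Finset (Γ × Gen S))
    (μ : Conf N → ℝ) : ℝ :=
  (1 / 2) * ∑ e ∈ Eset, ∑ ζ : ({a // a ∈ A} → Bool),
    (Fintype.card ({a // a ∈ A} → Bool) : ℝ)⁻¹ *
      (Real.sqrt (margDens N A μ (exchOn A e.1 (e.1 * (e.2 : Γ)) ζ)) -
        Real.sqrt (margDens N A μ ζ)) ^ 2

/-- The marginal on `Z_Λ × Z_Λ` of the pushforward `σ̂μ` of `μ` under `η ↦ (η, σ⁻¹η)`. -/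
noncomputable def margTwo (σ : Γ) (A : Finset Γ) (μ : Conf N → ℝ)
    (ζ ζ' : {a // a ∈ A} → Bool) : ℝ :=
  ∑ η : Conf N,
    if ((∀ a : {a // a ∈ A}, liftZ N η (a : Γ) = ζ a) ∧
        (∀ a : {a // a ∈ A}, liftZ N η (σ * (a : Γ)) = ζ' a)) then μ η else 0

/-- The density of `(σ̂μ)|_{Λ×Λ}` with respect to `ν_Λ ⊗ ν_Λ`. -/
noncomputable def margTwoDens (σ : Γ) (A : Finset Γ) (μ : Conf N → ℝ)
    (ζ ζ' : {a // a ∈ A} → Bool) : ℝ :=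
  ((Fintype.card ({a // a ∈ A} → Bool) : ℝ)) ^ 2 * margTwo N σ A μ ζ ζ'

/-- `I^{(o,o)}_{Λ×Λ}(σ̂μ) = (1/2) ∫ (π̃_{o,o} √(d(σ̂μ)|_{Λ×Λ}/d(ν_Λ⊗ν_Λ)))² d(ν_Λ⊗ν_Λ)`. -/
noncomputable def Ioo (σ : Γ) (A : Finset Γ) (h1 : (1 : Γ) ∈ A) (μ : Conf N → ℝ) : ℝ :=
  (1 / 2) * ∑ ζ : ({a // a ∈ A} → Bool), ∑ ζ' : ({a // a ∈ A} → Bool),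
    (((Fintype.card ({a // a ∈ A} → Bool) : ℝ)) ^ 2)⁻¹ *
      (Real.sqrt (margTwoDens N σ A μ (Function.update ζ ⟨1, h1⟩ (ζ' ⟨1, h1⟩))
          (Function.update ζ' ⟨1, h1⟩ (ζ ⟨1, h1⟩))) -
        Real.sqrt (margTwoDens N σ A μ ζ ζ')) ^ 2

/-- The two-block restricted Dirichlet form `I°_{Λ×Λ}(σ̂μ)`, i.e. the Dirichlet form of
`L°_Λ ⊗ 1 + 1 ⊗ L°_Λ` of the square root of the density of `(σ̂μ)|_{Λ×Λ}`. -/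
noncomputable def ItwoRest {S : Finset Γ} (σ : Γ) (A : Finset Γ) (Eset : Finset (Γ × Gen S))
    (μ : Conf N → ℝ) : ℝ :=
  (1 / 2) * ∑ e ∈ Eset, ∑ ζ : ({a // a ∈ A} → Bool), ∑ ζ' : ({a // a ∈ A} → Bool),
    (((Fintype.card ({a // a ∈ A} → Bool) : ℝ)) ^ 2)⁻¹ *
      ((Real.sqrt (margTwoDens N σ A μ (exchOn A e.1 (e.1 * (e.2 : Γ)) ζ) ζ') -
          Real.sqrt (margTwoDens N σ A μ ζ ζ')) ^ 2 +
        (Real.sqrt (margTwoDens N σ A μ ζ (exchOn A e.1 (e.1 * (e.2 : Γ)) ζ')) -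
          Real.sqrt (margTwoDens N σ A μ ζ ζ')) ^ 2)

end Quot

/-- The edge set `E_Λ` of the subgraph `Λ` spanned by the ball of radius `K`. -/
def ELam (S : Finset Γ) (K : ℕ) : Finset (Γ × Gen S) :=
  (ballF S K ×ˢ (Finset.univ : Finset (Gen S))).filter fun e => e.1 * (e.2 : Γ) ∈ ballF S K

end Tower

/-!
Write `D(a, b) := ∑_η (√μ(η^{ab}) - √μ(η))²`.

Since `Λ` and `σΛ` embed disjointly into `X_m`, exchanging the values at `ō` and `σ̄` exchanges the
values at `o` of the two block restrictions `(η|_Λ, (σ⁻¹η)|_Λ)`. By the reverse triangle inequality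
in `ℓ²`, `(√(∑ u) - √(∑ w))² ≤ ∑ (√u - √w)²`, so passing to this image measure does not increase the
energy: `I^{(o,o)}_{Λ×Λ}(σ̂μ) ≤ D(ō, σ̄) / 2`.

`√D(a, b)` is the `ℓ²`-distance between `√μ ∘ exch a b` and `√μ`, and
`exch a c = exch b c ∘ exch a b ∘ exch b c`, whence `√D(a, c) ≤ √D(a, b) + 2 √D(b, c)`. Along a
word of length `|σ|_Γ` this gives `√D(ō, σ̄) ≤ 2 |σ|_Γ max_e √D(e)` over edges `e`.

By `Γ/Γ_m`-invariance the `[Γ : Γ_m]` translates of an edge carry the same energy, so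
`D(e) ≤ 2 I_m(μ) / (c₀ [Γ : Γ_m]) ≤ 2C / (c₀ t_m)`, and `|σ|_Γ² ≤ ε² t_m` concludes.
-/

namespace Tower

section Exchange

variable {α : Type} [DecidableEq α]

lemma exch_self (x : α) (η : α → Bool) : exch x x η = η := by
  funext z; unfold exch; split_ifs <;> simp_all

lemma exch_involutive (x y : α) : Function.Involutive (exch x y) := by
  intro η; funext z; unfold exch; split_ifs <;> simp_all

lemma exch_conj {a b c : α} (hab : a ≠ b) (hac : a ≠ c) (η : α → Bool) :
    exch b c (exch a b (exch b c η)) = exch a c η := by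
  funext z; unfold exch; split_ifs <;> simp_all

end Exchange

section L2

variable {ι : Type} [Fintype ι]

lemma sqrt_sum_sq_add_le (f g : ι → ℝ) :
    √(∑ i, (f i + g i) ^ 2) ≤ √(∑ i, f i ^ 2) + √(∑ i, g i ^ 2) := by
  simpa [EuclideanSpace.norm_eq] using
    norm_add_le (WithLp.toLp 2 f : EuclideanSpace ℝ ι) (WithLp.toLp 2 g)

lemma sq_sqrt_sum_sub_sqrt_sum_le {u w : ι → ℝ} (hu : ∀ i, 0 ≤ u i) (hw : ∀ i, 0 ≤ w i) :
    (√(∑ i, u i) - √(∑ i, w i)) ^ 2 ≤ ∑ i, (√(u i) - √(w i)) ^ 2 := by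
  set x : EuclideanSpace ℝ ι := WithLp.toLp 2 fun i => √(u i)
  set y : EuclideanSpace ℝ ι := WithLp.toLp 2 fun i => √(w i)
  have hx : ‖x‖ = √(∑ i, u i) := by simp [x, EuclideanSpace.norm_eq, Real.sq_sqrt (hu _)]
  have hy : ‖y‖ = √(∑ i, w i) := by simp [y, EuclideanSpace.norm_eq, Real.sq_sqrt (hw _)]
  have hxy : ‖x - y‖ ^ 2 = ∑ i, (√(u i) - √(w i)) ^ 2 := by
    simp [x, y, EuclideanSpace.real_norm_sq_eq]
  rw [← hx, ← hy, ← hxy, ← sq_abs]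
  exact pow_le_pow_left₀ (abs_nonneg _) (abs_norm_sub_norm_le x y) 2

end L2

section Energy

variable {α : Type} [DecidableEq α] [Fintype α]

noncomputable def exchEnergy (μ : (α → Bool) → ℝ) (a b : α) : ℝ :=
  ∑ η, (√(μ (exch a b η)) - √(μ η)) ^ 2

lemma exchEnergy_self (μ : (α → Bool) → ℝ) (a : α) : exchEnergy μ a a = 0 := by
  simp [exchEnergy, exch_self]

lemma exchEnergy_nonneg (μ : (α → Bool) → ℝ) (a b : α) : 0 ≤ exchEnergy μ a b :=
  Finset.sum_nonneg fun _ _ => sq_nonneg _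

lemma sqrt_exchEnergy_le (μ : (α → Bool) → ℝ) (a b c : α) :
    √(exchEnergy μ a c) ≤ √(exchEnergy μ a b) + 2 * √(exchEnergy μ b c) := by
  by_cases hab : a = b
  · subst hab
    rw [exchEnergy_self, Real.sqrt_zero]
    linarith [Real.sqrt_nonneg (exchEnergy μ a c)]
  by_cases hac : a = c
  · subst hac
    rw [exchEnergy_self, Real.sqrt_zero]
    positivity
  set f : (α → Bool) → ℝ := fun η => √(μ η)
  have hbc_bij : Function.Bijective (exch b c) := (exch_involutive b c).bijective
  have hab_bc_bij : Function.Bijective (exch a b ∘ exch b c) :=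
    (exch_involutive a b).bijective.comp hbc_bij
  have hfirst : ∑ η, (f (exch b c (exch a b (exch b c η))) - f (exch a b (exch b c η))) ^ 2 =
      exchEnergy μ b c :=
    Fintype.sum_bijective _ hab_bc_bij _ (fun η => (f (exch b c η) - f η) ^ 2) fun _ => rfl
  have hsecond : ∑ η, (f (exch a b (exch b c η)) - f (exch b c η)) ^ 2 = exchEnergy μ a b :=
    Fintype.sum_bijective _ hbc_bij _ (fun η => (f (exch a b η) - f η) ^ 2) fun _ => rfl
  have hsplit : exchEnergy μ a c = ∑ η,
      ((f (exch b c (exch a b (exch b c η))) - f (exch a b (exch b c η))) +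
        ((f (exch a b (exch b c η)) - f (exch b c η)) + (f (exch b c η) - f η))) ^ 2 := by
    simp only [exchEnergy, exch_conj hab hac]
    congr 1 with η
    ring
  calc √(exchEnergy μ a c)
      ≤ √(∑ η, (f (exch b c (exch a b (exch b c η))) - f (exch a b (exch b c η))) ^ 2) +
          (√(∑ η, (f (exch a b (exch b c η)) - f (exch b c η)) ^ 2) +
            √(∑ η, (f (exch b c η) - f η) ^ 2)) := by
        rw [hsplit]
        exact (sqrt_sum_sq_add_le _ _).trans (add_le_add le_rfl (sqrt_sum_sq_add_le _ _))
    _ = √(exchEnergy μ b c) + (√(exchEnergy μ a b) + √(exchEnergy μ b c)) := by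
        rw [hfirst, hsecond]; rfl
    _ = √(exchEnergy μ a b) + 2 * √(exchEnergy μ b c) := by ring

end Energy

section Balls

variable {Γ : Type} [Group Γ] [DecidableEq Γ] {S : Finset Γ}

lemma ballF_subset_succ (S : Finset Γ) (n : ℕ) : ballF S n ⊆ ballF S (n + 1) :=
  Finset.subset_union_left

lemma ballF_eq_pow (S : Finset Γ) (n : ℕ) : ballF S n = insert 1 S ^ n := by
  induction n with
  | zero => rfl
  | succ n ih =>
    rw [pow_succ, ← ih, Finset.insert_eq, Finset.mul_union, Finset.singleton_one, mul_one]
    rfl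

lemma inv_mem_ballF (hS : ∀ s ∈ S, s⁻¹ ∈ S) {n : ℕ} {x : Γ} (hx : x ∈ ballF S n) :
    x⁻¹ ∈ ballF S n := by
  have hsymm : (insert 1 S)⁻¹ = insert (1 : Γ) S := by
    ext s
    rw [Finset.mem_inv', Finset.mem_insert, Finset.mem_insert, inv_eq_one]
    exact or_congr_right ⟨fun h => by simpa using hS _ h, hS s⟩
  rw [ballF_eq_pow] at hx ⊢
  rw [← hsymm, inv_pow]
  exact Finset.inv_mem_inv hx

lemma notMem_ballF_of_lt_wordNorm {n : ℕ} {x : Γ} (h : n < wordNorm S x) : x ∉ ballF S n :=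
  fun hx => (Nat.sInf_le hx).not_gt h

lemma mem_ballF_wordNorm {x : Γ} (h : 0 < wordNorm S x) : x ∈ ballF S (wordNorm S x) := by
  refine Nat.sInf_mem (s := {n | x ∈ ballF S n}) (Set.nonempty_iff_ne_empty.2 fun hempty => ?_)
  simp [wordNorm, hempty] at h

lemma exchEnergy_le_of_mem_ballF {α : Type} [DecidableEq α] [Fintype α]
    (μ : (α → Bool) → ℝ) (f : Γ → α) {β : ℝ} (hβ : 0 ≤ β)
    (hstep : ∀ y, ∀ s ∈ S, exchEnergy μ (f y) (f (y * s)) ≤ β) {n : ℕ} {x : Γ}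
    (hx : x ∈ ballF S n) : exchEnergy μ (f 1) (f x) ≤ (2 * n) ^ 2 * β := by
  suffices h : √(exchEnergy μ (f 1) (f x)) ≤ 2 * n * √β by
    rwa [Real.sqrt_le_left (by positivity), mul_pow, Real.sq_sqrt hβ] at h
  induction n generalizing x with
  | zero =>
    rw [Finset.mem_singleton.1 hx, exchEnergy_self, Real.sqrt_zero]
    simp
  | succ n ih =>
    rcases Finset.mem_union.1 hx with hx | hx
    · exact (ih hx).trans (by gcongr; simp)
    · obtain ⟨y, hy, s, hs, rfl⟩ := Finset.mem_mul.1 hx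
      calc √(exchEnergy μ (f 1) (f (y * s)))
          ≤ √(exchEnergy μ (f 1) (f y)) + 2 * √(exchEnergy μ (f y) (f (y * s))) :=
            sqrt_exchEnergy_le μ _ _ _
        _ ≤ 2 * n * √β + 2 * √β := by
            gcongr
            exacts [ih hy, hstep y s hs]
        _ = 2 * ↑(n + 1) * √β := by push_cast; ring

end Balls

section Pushforward

variable {Z Y : Type} [Fintype Z] [Fintype Y] [DecidableEq Y]

noncomputable def pushforward (P : Z → Y) (μ : Z → ℝ) (y : Y) : ℝ :=
  ∑ z, if P z = y then μ z else 0

lemma sum_sq_sqrt_pushforward_sub_le (P : Z → Y) {T : Z → Z} (hT : T.Bijective) {s : Y → Y}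
    (hs : s.Injective) (hPT : ∀ z, P (T z) = s (P z)) {μ : Z → ℝ} (hμ : ∀ z, 0 ≤ μ z) :
    ∑ y, (√(pushforward P μ (s y)) - √(pushforward P μ y)) ^ 2 ≤
      ∑ z, (√(μ (T z)) - √(μ z)) ^ 2 := by
  have hpush : ∀ y, pushforward P μ (s y) = ∑ z, if P z = y then μ (T z) else 0 := fun y =>
    (Fintype.sum_bijective T hT _ _ fun z => by simp only [hPT, hs.eq_iff]).symm
  calc ∑ y, (√(pushforward P μ (s y)) - √(pushforward P μ y)) ^ 2
      ≤ ∑ y, ∑ z, (√(if P z = y then μ (T z) else 0) - √(if P z = y then μ z else 0)) ^ 2 :=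
        Finset.sum_le_sum fun y _ => by
          rw [hpush]
          exact sq_sqrt_sum_sub_sqrt_sum_le (fun z => by split_ifs <;> simp [hμ])
            (fun z => by split_ifs <;> simp [hμ])
    _ = ∑ z, ∑ y, if P z = y then (√(μ (T z)) - √(μ z)) ^ 2 else 0 := by
        rw [Finset.sum_comm]
        exact Finset.sum_congr rfl fun z _ => Finset.sum_congr rfl fun y _ => by
          split_ifs <;> simp
    _ = ∑ z, (√(μ (T z)) - √(μ z)) ^ 2 := by simp

end Pushforward

def swapAt {ι β : Type} [DecidableEq ι] (o : ι) (p : (ι → β) × (ι → β)) : (ι → β) × (ι → β) :=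
  (Function.update p.1 o (p.2 o), Function.update p.2 o (p.1 o))

lemma swapAt_involutive {ι β : Type} [DecidableEq ι] (o : ι) :
    Function.Involutive (swapAt (β := β) o) := by
  rintro ⟨ζ, ζ'⟩
  simp [swapAt]

section TwoBlocks

variable {Γ : Type} [Group Γ] (N : Subgroup Γ)

/-- `η ↦ (η|_A, (σ⁻¹η)|_A)`, the map whose image of `μ` is `(σ̂μ)|_{A×A}`. -/
def twoBlocks (σ : Γ) (A : Finset Γ) (η : Conf N) :
    ({a // a ∈ A} → Bool) × ({a // a ∈ A} → Bool) :=
  (fun a => liftZ N η a, fun a => liftZ N η (σ * a))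

lemma margTwo_eq_pushforward [Fintype (Γ ⧸ N)] [DecidableEq (Γ ⧸ N)] (σ : Γ) (A : Finset Γ)
    (μ : Conf N → ℝ) (ζ ζ' : {a // a ∈ A} → Bool) :
    margTwo N σ A μ ζ ζ' = pushforward (twoBlocks N σ A) μ (ζ, ζ') := by
  refine Finset.sum_congr rfl fun η _ => if_congr ?_ rfl rfl
  simp only [twoBlocks, Prod.mk.injEq, funext_iff]

lemma twoBlocks_exch [DecidableEq Γ] [DecidableEq (Γ ⧸ N)] {σ : Γ} {A : Finset Γ}
    (h1 : (1 : Γ) ∈ A) (hσ : σ ∉ A) (hσinv : σ⁻¹ ∉ A)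
    (hinj : Set.InjOn (QuotientGroup.mk : Γ → Γ ⧸ N) ↑(A ∪ A.image (σ * ·))) (η : Conf N) :
    twoBlocks N σ A (exch (QuotientGroup.mk 1) (QuotientGroup.mk σ) η) =
      swapAt ⟨1, h1⟩ (twoBlocks N σ A η) := by
  have hA : ∀ a ∈ A, a ∈ (↑(A ∪ A.image (σ * ·)) : Set Γ) := fun a ha => by simp [ha]
  have hσA : ∀ a ∈ A, σ * a ∈ (↑(A ∪ A.image (σ * ·)) : Set Γ) := fun a ha => by
    simp only [Finset.coe_union, Finset.coe_image, Set.mem_union, Set.mem_image]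
    exact Or.inr ⟨a, ha, rfl⟩
  have hmk_one : ∀ a ∈ A, (QuotientGroup.mk a : Γ ⧸ N) = QuotientGroup.mk 1 ↔ a = 1 :=
    fun a ha => hinj.eq_iff (hA a ha) (hA 1 h1)
  have hσ_mem : σ ∈ (↑(A ∪ A.image (σ * ·)) : Set Γ) := by simpa using hσA 1 h1
  have hmk_σ : ∀ a ∈ A, (QuotientGroup.mk a : Γ ⧸ N) ≠ QuotientGroup.mk σ := fun a ha h =>
    hσ (hinj (hA a ha) hσ_mem h ▸ ha)
  have hσmk_one : ∀ a ∈ A, (QuotientGroup.mk (σ * a) : Γ ⧸ N) ≠ QuotientGroup.mk 1 :=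
    fun a ha h => hσinv (by rwa [inv_eq_of_mul_eq_one_right (hinj (hσA a ha) (hA 1 h1) h)])
  have hσmk_σ : ∀ a ∈ A, (QuotientGroup.mk (σ * a) : Γ ⧸ N) = QuotientGroup.mk σ ↔ a = 1 :=
    fun a ha => (hinj.eq_iff (hσA a ha) hσ_mem).trans (by simp)
  ext a <;> simp [twoBlocks, swapAt, exch, liftZ, Function.update_apply, Subtype.ext_iff,
    hmk_one a a.2, hmk_σ a a.2, hσmk_one a a.2, hσmk_σ a a.2]

lemma Ioo_le_exchEnergy [DecidableEq Γ] [Fintype (Γ ⧸ N)] [DecidableEq (Γ ⧸ N)] {σ : Γ}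
    {A : Finset Γ} (h1 : (1 : Γ) ∈ A) (hσ : σ ∉ A) (hσinv : σ⁻¹ ∉ A)
    (hinj : Set.InjOn (QuotientGroup.mk : Γ → Γ ⧸ N) ↑(A ∪ A.image (σ * ·))) {μ : Conf N → ℝ}
    (hμ : ∀ η, 0 ≤ μ η) :
    Ioo N σ A h1 μ ≤ 1 / 2 * exchEnergy μ (QuotientGroup.mk 1) (QuotientGroup.mk σ) := by
  set κ : ℝ := (Fintype.card ({a // a ∈ A} → Bool) : ℝ)
  have hκ : 0 < κ := Nat.cast_pos.2 Fintype.card_pos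
  have hsqrt : ∀ ζ ζ', √(margTwoDens N σ A μ ζ ζ') =
      κ * √(pushforward (twoBlocks N σ A) μ (ζ, ζ')) := fun ζ ζ' => by
    rw [margTwoDens, margTwo_eq_pushforward, Real.sqrt_mul (sq_nonneg κ), Real.sqrt_sq hκ.le]
  have hIoo : Ioo N σ A h1 μ = 1 / 2 * ∑ p,
      (√(pushforward (twoBlocks N σ A) μ (swapAt ⟨1, h1⟩ p)) -
        √(pushforward (twoBlocks N σ A) μ p)) ^ 2 := by
    rw [Ioo, Fintype.sum_prod_type]
    congr 1
    refine Finset.sum_congr rfl fun ζ _ => Finset.sum_congr rfl fun ζ' _ => ?_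
    rw [hsqrt, hsqrt, ← mul_sub, mul_pow, inv_mul_cancel_left₀ (by positivity)]
    rfl
  rw [hIoo]
  gcongr
  exact sum_sq_sqrt_pushforward_sub_le _ (exch_involutive _ _).bijective
    (swapAt_involutive _).injective (twoBlocks_exch N h1 hσ hσinv hinj) hμ

end TwoBlocks

section DirichletForm

variable {Γ : Type} [Group Γ] (N : Subgroup Γ) [N.Normal]

lemma actQ_exch [DecidableEq (Γ ⧸ N)] (τ a b : Γ ⧸ N) (η : Conf N) :
    actQ N τ (exch a b η) = exch (τ * a) (τ * b) (actQ N τ η) := by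
  funext z
  simp only [actQ, exch, inv_mul_eq_iff_eq_mul, inv_mul_cancel_left]

lemma actQ_bijective (τ : Γ ⧸ N) : Function.Bijective (actQ N τ) :=
  Function.bijective_iff_has_inverse.2
    ⟨actQ N τ⁻¹, fun η => by funext z; simp [actQ],
      fun η => by funext z; simp [actQ]⟩

variable [Fintype (Γ ⧸ N)] [DecidableEq (Γ ⧸ N)]

lemma exchEnergy_mul_left {μ : Conf N → ℝ} (hinv : IsInvariant N μ) (τ a b : Γ ⧸ N) :
    exchEnergy μ (τ * a) (τ * b) = exchEnergy μ a b :=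
  (Fintype.sum_bijective (actQ N τ) (actQ_bijective N τ) _ _ fun η => by
    rw [← actQ_exch, hinv, hinv]).symm

variable {S : Finset Γ}

lemma card_mul_exchEnergy_le_sum {μ : Conf N → ℝ} (hinv : IsInvariant N μ) (v : Γ ⧸ N)
    (s : Gen S) :
    Fintype.card (Γ ⧸ N) * exchEnergy μ v (v * QuotientGroup.mk (s : Γ)) ≤
      ∑ e : (Γ ⧸ N) × Gen S, exchEnergy μ e.1 (e.1 * QuotientGroup.mk (e.2 : Γ)) := by
  have htranslate : ∀ (w : Γ ⧸ N) (s : Gen S), exchEnergy μ w (w * QuotientGroup.mk (s : Γ)) =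
      exchEnergy μ 1 (QuotientGroup.mk (s : Γ)) := fun w s => by
    rw [← exchEnergy_mul_left N hinv w 1, mul_one]
  calc (Fintype.card (Γ ⧸ N) : ℝ) * exchEnergy μ v (v * QuotientGroup.mk (s : Γ))
      = ∑ w : Γ ⧸ N, exchEnergy μ w (w * QuotientGroup.mk (s : Γ)) := by
        rw [Finset.sum_congr rfl fun w _ => htranslate w s, htranslate, Finset.sum_const,
          Finset.card_univ, nsmul_eq_mul]
    _ ≤ ∑ w : Γ ⧸ N, ∑ s' : Gen S, exchEnergy μ w (w * QuotientGroup.mk (s' : Γ)) :=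
        Finset.sum_le_sum fun w _ => Finset.single_le_sum
          (f := fun s' : Gen S => exchEnergy μ w (w * QuotientGroup.mk (s' : Γ)))
          (fun s' _ => exchEnergy_nonneg μ w (w * QuotientGroup.mk (s' : Γ))) (Finset.mem_univ s)
    _ = ∑ e : (Γ ⧸ N) × Gen S, exchEnergy μ e.1 (e.1 * QuotientGroup.mk (e.2 : Γ)) := by
        rw [Fintype.sum_prod_type]

variable [DecidableEq Γ]

lemma c₀_mul_sum_exchEnergy_le (c : JumpRate S) (μ : Conf N → ℝ) :
    c.c₀ * ∑ e : (Γ ⧸ N) × Gen S, exchEnergy μ e.1 (e.1 * QuotientGroup.mk (e.2 : Γ)) ≤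
      2 * ImSum N c μ := by
  have hZ : (0 : ℝ) < Fintype.card (Conf N) := Nat.cast_pos.2 Fintype.card_pos
  have hterm : ∀ (e : (Γ ⧸ N) × Gen S) η, nuU N η * (cQ N c e.1 e.2 η *
      (sqrtDens N μ (exchQ N e.1 (e.2 : Γ) η) - sqrtDens N μ η) ^ 2) =
      cQ N c e.1 e.2 η * (√(μ (exch e.1 (e.1 * QuotientGroup.mk (e.2 : Γ)) η)) - √(μ η)) ^ 2 := by
    intro e η
    simp only [nuU, sqrtDens, dens, exchQ, Real.sqrt_mul hZ.le, ← mul_sub, mul_pow,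
      Real.sq_sqrt hZ.le]
    field_simp
  calc c.c₀ * ∑ e : (Γ ⧸ N) × Gen S, exchEnergy μ e.1 (e.1 * QuotientGroup.mk (e.2 : Γ))
      = ∑ e : (Γ ⧸ N) × Gen S, ∑ η,
          c.c₀ * (√(μ (exch e.1 (e.1 * QuotientGroup.mk (e.2 : Γ)) η)) - √(μ η)) ^ 2 := by
        simp only [exchEnergy, Finset.mul_sum]
    _ ≤ ∑ e : (Γ ⧸ N) × Gen S, ∑ η, cQ N c e.1 e.2 η *
          (√(μ (exch e.1 (e.1 * QuotientGroup.mk (e.2 : Γ)) η)) - √(μ η)) ^ 2 := by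
        gcongr with e _ η _
        exact c.nondeg _ _ _
    _ = 2 * ImSum N c μ := by
        simp only [ImSum, hterm]
        ring

lemma exchEnergy_le_of_ImSum_le (c : JumpRate S) {μ : Conf N → ℝ} (hinv : IsInvariant N μ)
    {C T : ℝ} (hT : 0 < T) (hI : ImSum N c μ ≤ C * N.index / T) (v : Γ ⧸ N) (s : Gen S) :
    exchEnergy μ v (v * QuotientGroup.mk (s : Γ)) ≤ 2 * C / (c.c₀ * T) := by
  rw [Subgroup.index_eq_card, Nat.card_eq_fintype_card] at hI
  set E := exchEnergy μ v (v * QuotientGroup.mk (s : Γ))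
  have hcard : (0 : ℝ) < Fintype.card (Γ ⧸ N) := Nat.cast_pos.2 Fintype.card_pos
  have hsum : c.c₀ * (Fintype.card (Γ ⧸ N) * E) ≤ 2 * ImSum N c μ :=
    (mul_le_mul_of_nonneg_left (card_mul_exchEnergy_le_sum N hinv v s) c.c₀_pos.le).trans
      (c₀_mul_sum_exchEnergy_le N c μ)
  rw [le_div_iff₀ (mul_pos c.c₀_pos hT)]
  refine le_of_mul_le_mul_left ?_ hcard
  calc Fintype.card (Γ ⧸ N) * (E * (c.c₀ * T)) = T * (c.c₀ * (Fintype.card (Γ ⧸ N) * E)) := by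
        ring
    _ ≤ T * (2 * (C * Fintype.card (Γ ⧸ N) / T)) :=
        mul_le_mul_of_nonneg_left (hsum.trans (by linarith)) hT.le
    _ = Fintype.card (Γ ⧸ N) * (2 * C) := by field_simp

end DirichletForm

theorem two_blocks_exchange_estimate_general
    {Γ : Type} [Group Γ] [DecidableEq Γ]
    (S : Finset Γ) (hS_symm : ∀ s ∈ S, s⁻¹ ∈ S)
    (Γs : ℕ → Subgroup Γ) [∀ m, (Γs m).Normal]
    [∀ m, Fintype (Γ ⧸ Γs m)] [∀ m, DecidableEq (Γ ⧸ Γs m)]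
    (t : ℕ → ℝ) (ht_pos : ∀ m, 0 < t m)
    (c : JumpRate S) (C : ℝ) (hC : 0 < C) (K : ℕ)
    (ε : ℝ) (m : ℕ) (σ : Γ)
    (hσL : 2 * K < wordNorm S σ)
    (hσU : (wordNorm S σ : ℝ) ≤ ε * Real.sqrt (t m))
    (hinj : Set.InjOn (fun x : Γ => (QuotientGroup.mk x : Γ ⧸ Γs m))
      (↑(ballF S (K + 1) ∪ (ballF S (K + 1)).image (σ * ·))))
    (μ : Conf (Γs m) → ℝ) (hμ : IsProb (Γs m) μ) (hinv : IsInvariant (Γs m) μ)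
    (hI : ImSum (Γs m) c μ ≤ C * ((Γs m).index : ℝ) / t m) :
    Ioo (Γs m) σ (ballF S K) (one_mem_ballF S K) μ ≤ 4 * C / c.c₀ * ε ^ 2 := by
  set n := wordNorm S σ
  have hc₀ := c.c₀_pos
  have htm := ht_pos m
  have hσ : σ ∉ ballF S K := notMem_ballF_of_lt_wordNorm (by omega)
  have hσinv : σ⁻¹ ∉ ballF S K := fun h => hσ (by simpa using inv_mem_ballF hS_symm h)
  have hinjK : Set.InjOn (QuotientGroup.mk : Γ → Γ ⧸ Γs m)
      ↑(ballF S K ∪ (ballF S K).image (σ * ·)) :=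
    hinj.mono <| Finset.coe_subset.2 <| Finset.union_subset_union (ballF_subset_succ S K)
      (Finset.image_subset_image (ballF_subset_succ S K))
  have hstep : ∀ y, ∀ s ∈ S, exchEnergy μ (QuotientGroup.mk y) (QuotientGroup.mk (y * s)) ≤
      2 * C / (c.c₀ * t m) := fun y s hs => by
    rw [QuotientGroup.mk_mul]
    exact exchEnergy_le_of_ImSum_le _ c hinv htm hI _ ⟨s, hs⟩
  have hn : (n : ℝ) ^ 2 / t m ≤ ε ^ 2 := by
    rw [div_le_iff₀ htm, ← Real.sq_sqrt htm.le, ← mul_pow]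
    exact pow_le_pow_left₀ (Nat.cast_nonneg _) hσU 2
  calc Ioo (Γs m) σ (ballF S K) (one_mem_ballF S K) μ
      ≤ 1 / 2 * exchEnergy μ (QuotientGroup.mk 1) (QuotientGroup.mk σ) :=
        Ioo_le_exchEnergy _ (one_mem_ballF S K) hσ hσinv hinjK hμ.1
    _ ≤ 1 / 2 * ((2 * n) ^ 2 * (2 * C / (c.c₀ * t m))) := by
        gcongr
        exact exchEnergy_le_of_mem_ballF μ QuotientGroup.mk (by positivity) hstep
          (mem_ballF_wordNorm (by omega))
    _ = 4 * C / c.c₀ * (n ^ 2 / t m) := by field_simp; ring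
    _ ≤ 4 * C / c.c₀ * ε ^ 2 := by gcongr

/-- **Two-blocks exchange estimate** (part of Lemma 3.5): with `2K < |σ|_Γ ≤ ε√t_m` and the
covering map injective on `B(o,K+1) ∪ σB(o,K+1)`, for every `μ ∈ P_{m,C}` one has
`I^{(o,o)}_{Λ×Λ}(σ̂μ) ≤ (4C/c₀) ε²`. -/
theorem two_blocks_exchange_estimate
    {Γ : Type} [Group Γ] [DecidableEq Γ] [Infinite Γ]
    (S : Finset Γ) (hS_symm : ∀ s ∈ S, s⁻¹ ∈ S)
    (hS_gen : Subgroup.closure (S : Set Γ) = ⊤)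
    (Γs : ℕ → Subgroup Γ) [∀ m, (Γs m).Normal] [∀ m, (Γs m).FiniteIndex]
    [∀ m, Fintype (Γ ⧸ Γs m)] [∀ m, DecidableEq (Γ ⧸ Γs m)]
    (hdesc : ∀ m, Γs (m + 1) ≤ Γs m)
    (hsep : ∀ x : Γ, (∀ m, x ∈ Γs m) → x = 1)
    (t : ℕ → ℝ) (ht_pos : ∀ m, 0 < t m) (ht_mono : StrictMono t)
    (ht_top : Tendsto t atTop atTop)
    (ht_diam : ∀ m, Real.sqrt (t m) ≤ 2 * (diamQ (Γs m) S : ℝ))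
    (c : JumpRate S) (C : ℝ) (hC : 0 < C) (K : ℕ)
    (ε : ℝ) (hε : 0 < ε) (m : ℕ) (hm : 1 ≤ m) (σ : Γ)
    (hσL : 2 * K < wordNorm S σ)
    (hσU : (wordNorm S σ : ℝ) ≤ ε * Real.sqrt (t m))
    (hinj : Set.InjOn (fun x : Γ => (QuotientGroup.mk x : Γ ⧸ Γs m))
      (↑(ballF S (K + 1) ∪ (ballF S (K + 1)).image (σ * ·))))
    (μ : Conf (Γs m) → ℝ) (hμ : IsProb (Γs m) μ) (hinv : IsInvariant (Γs m) μ)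
    (hI : ImSum (Γs m) c μ ≤ C * ((Γs m).index : ℝ) / t m) :
    Ioo (Γs m) σ (ballF S K) (one_mem_ballF S K) μ ≤ 4 * C / c.c₀ * ε ^ 2 :=
  two_blocks_exchange_estimate_general S hS_symm Γs t ht_pos c C hC K ε m σ hσL hσU hinj μ hμ hinv
    hI

end Tower
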